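/- arXiv:1610.06694 — 2 statements merged into one kernel-verified Lean document; each statement's English description precedes it below -/
import Mathlib

section
/- If M_x = 2^ℓ and M_r = 2^(ℓ+t), then under additive statistical blinding (X valued in {0,...,M_x}, R uniform on {0,...,M_r}, Y = X + R), the mutual information satisfies I(X;Y) ≤ 2^{-t}. -/
open MeasureTheory Real Finset

noncomputable section

/-- Independence of two finite-valued random variables, stated via the product rule. -/
def Indep2 {Ω α β : Type*} [MeasurableSpace Ω] (μ : Measure Ω) (X : Ω → α) (R : Ω → β) : Prop :=
  ∀ a b, μ {ω | X ω = a ∧ R ω = b} = μ {ω | X ω = a} * μ {ω | R ω = b}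

/-- `X` is uniformly distributed on the (finite) type `α`. -/
def UniformOn {Ω α : Type*} [Fintype α] [MeasurableSpace Ω] (μ : Measure Ω) (X : Ω → α) : Prop :=
  ∀ a, μ {ω | X ω = a} = (Fintype.card α : ENNReal)⁻¹

/-- Shannon entropy (natural log) of a random variable valued in a finite type. -/
def entropy {Ω α : Type*} [Fintype α] [MeasurableSpace Ω] (μ : Measure Ω) (X : Ω → α) : ℝ :=
  ∑ a, Real.negMulLog (μ {ω | X ω = a}).toReal

/-- Shannon entropy (natural log) of a finitely-supported random variable on a finite space. -/
def entropyF {Ω α : Type*} [Fintype Ω] [DecidableEq α] [MeasurableSpace Ω] (μ : Measure Ω)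
    (X : Ω → α) : ℝ :=
  ∑ a ∈ Finset.image X Finset.univ, Real.negMulLog (μ {ω | X ω = a}).toReal

/-!
Given `X = x`, the sum `Y = X + R` is uniform on the `N + 1` values `x, …, x + N`, so
`H(X, Y) - H(X) = log (N + 1)`, while `Y` takes at most `M + N + 1` values, so by concavity of
`-u log u` we get `H(Y) ≤ log (M + N + 1)`. Hence `I(X; Y) ≤ log (1 + M / (N + 1)) ≤ M / (N + 1)`,
and with `M = 2 ^ ℓ`, `N = 2 ^ (ℓ + t)` this is below `2 ^ (-t)`.
-/

section FiniteSupport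

variable {Ω α : Type*} [Fintype Ω] [MeasurableSpace Ω] [DecidableEq α] (μ : Measure Ω)

lemma sum_image_measureReal_eq_sum {f : ℝ → ℝ} (hf : f 0 = 0) (Z : Ω → α) {S : Finset α}
    (hS : ∀ a ∉ S, μ.real {ω | Z ω = a} = 0) :
    ∑ a ∈ univ.image Z, f (μ.real {ω | Z ω = a}) = ∑ a ∈ S, f (μ.real {ω | Z ω = a}) := by
  rw [sum_subset subset_union_right, ← sum_subset (subset_union_left (s₂ := univ.image Z))]
  · intro a _ ha
    rw [hS a ha, hf]
  · intro a _ ha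
    have hempty : {ω | Z ω = a} = ∅ :=
      Set.eq_empty_of_forall_notMem fun ω hω => ha (mem_image.2 ⟨ω, mem_univ ω, hω⟩)
    rw [hempty, measureReal_empty, hf]

lemma entropyF_eq_sum (Z : Ω → α) {S : Finset α} (hS : ∀ a ∉ S, μ.real {ω | Z ω = a} = 0) :
    entropyF μ Z = ∑ a ∈ S, negMulLog (μ.real {ω | Z ω = a}) :=
  sum_image_measureReal_eq_sum μ negMulLog_zero Z hS

lemma one_le_sum_measureReal [IsProbabilityMeasure μ] (Z : Ω → α) {S : Finset α}
    (hS : ∀ a ∉ S, μ.real {ω | Z ω = a} = 0) : 1 ≤ ∑ a ∈ S, μ.real {ω | Z ω = a} := by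
  calc 1 = μ.real (⋃ a ∈ univ.image Z, {ω | Z ω = a}) := by
        rw [← probReal_univ (μ := μ)]
        congr 1
        ext ω
        simp
    _ ≤ ∑ a ∈ univ.image Z, μ.real {ω | Z ω = a} := measureReal_biUnion_finset_le _ _
    _ = ∑ a ∈ S, μ.real {ω | Z ω = a} := sum_image_measureReal_eq_sum μ (f := id) rfl Z hS

end FiniteSupport

lemma sum_negMulLog_le {ι : Type*} (S : Finset ι) {q : ι → ℝ} (hq : ∀ i ∈ S, 0 ≤ q i) :
    ∑ i ∈ S, negMulLog (q i) ≤ (∑ i ∈ S, q i) * log #S + negMulLog (∑ i ∈ S, q i) := by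
  rcases S.eq_empty_or_nonempty with rfl | hS
  · simp
  have hn : (0 : ℝ) < #S := by exact_mod_cast hS.card_pos
  have hw : ∑ _i ∈ S, (#S : ℝ)⁻¹ = 1 := by
    rw [sum_const, nsmul_eq_mul, mul_inv_cancel₀ hn.ne']
  have hjensen := concaveOn_negMulLog.le_map_sum (fun _ _ => inv_nonneg.2 hn.le) hw hq
  simp only [smul_eq_mul, ← mul_sum] at hjensen
  rw [negMulLog_mul, negMulLog, log_inv] at hjensen
  have := mul_le_mul_of_nonneg_left hjensen hn.le
  field_simp at this
  linarith

def IsUniformUpTo {Ω : Type*} [MeasurableSpace Ω] (μ : Measure Ω) (R : Ω → ℕ) (N : ℕ) : Prop :=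
  ∀ r : ℕ, μ {ω | R ω = r} = if r ≤ N then ((N : ENNReal) + 1)⁻¹ else 0

section Blinding

variable {Ω : Type*} [MeasurableSpace Ω] {μ : Measure Ω} {X R : Ω → ℕ} {M N : ℕ}

lemma IsUniformUpTo.measureReal_eq (hR : IsUniformUpTo μ R N) (r : ℕ) :
    μ.real {ω | R ω = r} = if r ≤ N then ((N : ℝ) + 1)⁻¹ else 0 := by
  rw [measureReal_def, hR r]
  split_ifs <;> simp [ENNReal.toReal_add]

lemma measureReal_eq_and_add_eq_add (hInd : Indep2 μ X R) (x r : ℕ) :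
    μ.real {ω | X ω = x ∧ X ω + R ω = x + r} = μ.real {ω | X ω = x} * μ.real {ω | R ω = r} := by
  have hset : {ω | X ω = x ∧ X ω + R ω = x + r} = {ω | X ω = x ∧ R ω = r} := by
    ext ω
    simp only [Set.mem_ofPred_eq]
    omega
  rw [hset, measureReal_def, hInd, ENNReal.toReal_mul]
  rfl

lemma measureReal_eq_and_add_eq (hR : IsUniformUpTo μ R N) (hInd : Indep2 μ X R) (x y : ℕ) :
    μ.real {ω | X ω = x ∧ X ω + R ω = y}
      = if y ∈ Icc x (x + N) then μ.real {ω | X ω = x} * ((N : ℝ) + 1)⁻¹ else 0 := by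
  by_cases hxy : x ≤ y
  · obtain ⟨r, rfl⟩ := Nat.exists_eq_add_of_le hxy
    rw [measureReal_eq_and_add_eq_add hInd, hR.measureReal_eq]
    by_cases hr : r ≤ N <;> simp [hr]
  · have hempty : {ω | X ω = x ∧ X ω + R ω = y} = ∅ := by
      ext ω
      simp only [Set.mem_ofPred_eq, Set.mem_empty_iff_false, iff_false]
      omega
    rw [hempty, measureReal_empty, if_neg (by simp [hxy])]

lemma sum_apply_measureReal_eq_and_add_eq {f : ℝ → ℝ} (hf : f 0 = 0) (hR : IsUniformUpTo μ R N)
    (hInd : Indep2 μ X R) {x : ℕ} (hx : x ≤ M) :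
    ∑ y ∈ range (M + N + 1), f (μ.real {ω | X ω = x ∧ X ω + R ω = y})
      = (N + 1) * f (μ.real {ω | X ω = x} * ((N : ℝ) + 1)⁻¹) := by
  have hIcc : Icc x (x + N) ⊆ range (M + N + 1) := fun y hy => by
    simp only [mem_Icc, mem_range] at hy ⊢
    omega
  simp_rw [measureReal_eq_and_add_eq hR hInd, apply_ite f, hf, sum_ite_mem, inter_eq_right.2 hIcc,
    sum_const, Nat.card_Icc, show x + N + 1 - x = N + 1 by omega, nsmul_eq_mul]
  push_cast
  rfl

lemma measureReal_eq_eq_zero (hX : ∀ ω, X ω ≤ M) {x : ℕ} (hx : x ∉ range (M + 1)) :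
    μ.real {ω | X ω = x} = 0 := by
  have hempty : {ω | X ω = x} = ∅ := by
    ext ω
    simp only [mem_range, Set.mem_ofPred_eq, Set.mem_empty_iff_false, iff_false] at hx ⊢
    have := hX ω
    omega
  rw [hempty, measureReal_empty]

lemma measureReal_add_eq_le_sum [IsFiniteMeasure μ] (hX : ∀ ω, X ω ≤ M) (y : ℕ) :
    μ.real {ω | X ω + R ω = y} ≤ ∑ x ∈ range (M + 1), μ.real {ω | X ω = x ∧ X ω + R ω = y} :=
  (measureReal_mono (s₂ := ⋃ x ∈ range (M + 1), {ω | X ω = x ∧ X ω + R ω = y})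
    (fun ω hω => Set.mem_biUnion (mem_range_succ_iff.2 (hX ω)) ⟨rfl, hω⟩)
    (measure_ne_top _ _)).trans (measureReal_biUnion_finset_le _ _)

lemma measureReal_add_eq_eq_zero [IsFiniteMeasure μ] (hX : ∀ ω, X ω ≤ M)
    (hR : IsUniformUpTo μ R N) (hInd : Indep2 μ X R) {y : ℕ} (hy : y ∉ range (M + N + 1)) :
    μ.real {ω | X ω + R ω = y} = 0 := by
  refine le_antisymm ((measureReal_add_eq_le_sum hX y).trans_eq (sum_eq_zero fun x hx => ?_))
    measureReal_nonneg
  rw [measureReal_eq_and_add_eq hR hInd, if_neg]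
  simp only [mem_range, mem_Icc] at hx hy ⊢
  omega

lemma sum_measureReal_add_eq_le [IsFiniteMeasure μ] (hX : ∀ ω, X ω ≤ M)
    (hR : IsUniformUpTo μ R N) (hInd : Indep2 μ X R) :
    ∑ y ∈ range (M + N + 1), μ.real {ω | X ω + R ω = y}
      ≤ ∑ x ∈ range (M + 1), μ.real {ω | X ω = x} :=
  calc ∑ y ∈ range (M + N + 1), μ.real {ω | X ω + R ω = y}
      ≤ ∑ y ∈ range (M + N + 1), ∑ x ∈ range (M + 1), μ.real {ω | X ω = x ∧ X ω + R ω = y} :=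
        sum_le_sum fun y _ => measureReal_add_eq_le_sum hX y
    _ = ∑ x ∈ range (M + 1), ∑ y ∈ range (M + N + 1), μ.real {ω | X ω = x ∧ X ω + R ω = y} :=
        sum_comm
    _ = ∑ x ∈ range (M + 1), μ.real {ω | X ω = x} := sum_congr rfl fun x hx =>
        (sum_apply_measureReal_eq_and_add_eq (f := id) rfl hR hInd (mem_range_succ_iff.1 hx)).trans
          (by rw [id, mul_left_comm, mul_inv_cancel₀ (by positivity), mul_one])

variable [Fintype Ω]

lemma entropyF_pair_add_eq (hX : ∀ ω, X ω ≤ M) (hR : IsUniformUpTo μ R N) (hInd : Indep2 μ X R) :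
    entropyF μ (fun ω => (X ω, X ω + R ω))
      = ∑ x ∈ range (M + 1), negMulLog (μ.real {ω | X ω = x})
        + (∑ x ∈ range (M + 1), μ.real {ω | X ω = x}) * log (N + 1) := by
  have hpair : ∀ a : ℕ × ℕ, {ω | (X ω, X ω + R ω) = a} = {ω | X ω = a.1 ∧ X ω + R ω = a.2} :=
    fun a => by ext ω; simp [Prod.ext_iff]
  have hzero : ∀ a ∉ range (M + 1) ×ˢ range (M + N + 1),
      μ.real {ω | (X ω, X ω + R ω) = a} = 0 := by
    rintro ⟨x, y⟩ ha
    rw [hpair, measureReal_eq_and_add_eq hR hInd]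
    split_ifs with hy
    · by_cases hx : x ∈ range (M + 1)
      · simp only [mem_product, mem_range, mem_Icc] at ha hx hy
        omega
      · rw [measureReal_eq_eq_zero hX hx, zero_mul]
    · rfl
  simp_rw [entropyF_eq_sum μ _ hzero, sum_product, hpair, sum_mul, ← sum_add_distrib]
  refine sum_congr rfl fun x hx => ?_
  rw [sum_apply_measureReal_eq_and_add_eq negMulLog_zero hR hInd (mem_range_succ_iff.1 hx),
    negMulLog_mul]
  simp only [negMulLog, log_inv]
  field_simp

theorem mutualInfo_add_uniform_le [IsProbabilityMeasure μ] (hX : ∀ ω, X ω ≤ M) (hMN : M ≤ N + 1)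
    (hR : IsUniformUpTo μ R N) (hInd : Indep2 μ X R) :
    entropyF μ (fun ω => X ω + R ω)
        - (entropyF μ (fun ω => (X ω, X ω + R ω)) - entropyF μ X) ≤ M / (N + 1) := by
  set Q := ∑ y ∈ range (M + N + 1), μ.real {ω | X ω + R ω = y}
  set s := ∑ x ∈ range (M + 1), μ.real {ω | X ω = x}
  have hY : entropyF μ (fun ω => X ω + R ω) ≤ Q * log (M + N + 1) + negMulLog Q := by
    rw [entropyF_eq_sum μ _ fun y => measureReal_add_eq_eq_zero hX hR hInd]
    convert sum_negMulLog_le _ fun y _ => measureReal_nonneg using 3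
    simp
  -- The events `{X + R = y}` need not be measurable, so `Q` may exceed one; only `1 ≤ Q ≤ s`
  -- is available, and the last step of the estimate needs `M / (N + 1) ≤ 1` to absorb `Q - 1`.
  have hQ : 1 ≤ Q := one_le_sum_measureReal μ _ fun y => measureReal_add_eq_eq_zero hX hR hInd
  have hQs : Q ≤ s := sum_measureReal_add_eq_le hX hR hInd
  have hlog : log (M + N + 1) - log (N + 1) ≤ M / (N + 1) := by
    rw [← log_div (by positivity) (by positivity)]
    refine (log_le_sub_one_of_pos (by positivity)).trans_eq ?_
    field_simp
    ring
  have hε : (M : ℝ) / (N + 1) ≤ 1 := (div_le_one (by positivity)).2 (by exact_mod_cast hMN)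
  have hlogN : 0 ≤ log ((N : ℝ) + 1) := log_nonneg (by simp)
  rw [entropyF_pair_add_eq hX hR hInd, entropyF_eq_sum μ X fun x => measureReal_eq_eq_zero hX]
  calc _ = entropyF μ (fun ω => X ω + R ω) - s * log (N + 1) := by ring
    _ ≤ Q * log (M + N + 1) + negMulLog Q - Q * log (N + 1) := by
        linarith [mul_le_mul_of_nonneg_right hQs hlogN]
    _ ≤ Q * (M / (N + 1)) + (1 - Q) := by
        linarith [negMulLog_le_one_sub_self (zero_le_one.trans hQ),
          mul_le_mul_of_nonneg_left hlog (zero_le_one.trans hQ)]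
    _ ≤ M / (N + 1) := by nlinarith

end Blinding

/-- Statistical blinding: with `Mx = 2^ℓ` and `Mr = 2^(ℓ+t)`, the mutual information
between `X` and `Y = X + R` is at most `2^(-t)`. -/
theorem stmt7 {Ω : Type*} [Fintype Ω] [MeasurableSpace Ω] (μ : Measure Ω)
    [IsProbabilityMeasure μ] {ℓ t Mx Mr : ℕ} (hMx : Mx = 2 ^ ℓ) (hMr : Mr = 2 ^ (ℓ + t))
    (X R : Ω → ℕ) (hX : ∀ ω, X ω ≤ Mx)
    (hR : ∀ r : ℕ, μ {ω | R ω = r} = if r ≤ Mr then ((Mr : ENNReal) + 1)⁻¹ else 0)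
    (hInd : Indep2 μ X R) :
    entropyF μ (fun ω => X ω + R ω)
        - (entropyF μ (fun ω => (X ω, X ω + R ω)) - entropyF μ X)
      ≤ ((2 : ℝ) ^ t)⁻¹ := by
  have hMxr : (Mx : ℝ) * 2 ^ t = Mr := by
    rw [hMx, hMr]
    push_cast
    rw [pow_add]
  have hMN : Mx ≤ Mr + 1 := by
    rw [hMx, hMr]
    exact (Nat.pow_le_pow_right two_pos (Nat.le_add_right ℓ t)).trans (Nat.le_succ _)
  refine (mutualInfo_add_uniform_le hX hMN hR hInd).trans ?_
  rw [div_le_iff₀ (by positivity), inv_mul_eq_div, le_div_iff₀ (by positivity), hMxr]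
  linarith
end
end

section
/- The probability that the integer-sum ciphertext Y = X + R falls in the 'leaky' region (Y < M_x or Y > M_r) is at most 2 M_x / (M_r + 1). -/
open MeasureTheory Real Finset

noncomputable section

/-- The probability that the integer-sum ciphertext `Y = X + R` falls in the leaky
region (`Y < Mx` or `Y > Mr`) is at most `2 Mx / (Mr + 1)`. -/
theorem stmt14 {Ω : Type*} [Fintype Ω] [MeasurableSpace Ω] (μ : Measure Ω)
    [IsProbabilityMeasure μ] {Mx Mr : ℕ} (hM : Mx ≤ Mr)
    (X R : Ω → ℕ) (hX : ∀ ω, X ω ≤ Mx)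
    (hR : ∀ r : ℕ, μ {ω | R ω = r} = if r ≤ Mr then ((Mr : ENNReal) + 1)⁻¹ else 0)
    (hInd : Indep2 μ X R) :
    (μ {ω | X ω + R ω < Mx ∨ Mr < X ω + R ω}).toReal ≤ 2 * Mx / (Mr + 1) := by
  classical
  set N : ℕ := max Mr (Finset.univ.sup R) with hN
  set S : Finset ℕ := Finset.range Mx ∪ Finset.Ioc (Mr - Mx) N with hS
  have hsub : {ω | X ω + R ω < Mx ∨ Mr < X ω + R ω} ⊆ ⋃ r ∈ S, {ω | R ω = r} := by
    intro ω hω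
    have hRN : R ω ≤ N := le_trans (Finset.le_sup (Finset.mem_univ ω)) (le_max_right _ _)
    simp only [Set.mem_iUnion, Set.mem_setOf_eq, exists_prop]
    refine ⟨R ω, ?_, rfl⟩
    simp only [hS, Finset.mem_union, Finset.mem_range, Finset.mem_Ioc]
    rcases hω with h | h
    · exact Or.inl (by omega)
    · exact Or.inr ⟨by have := hX ω; omega, hRN⟩
  have h1 : μ {ω | X ω + R ω < Mx ∨ Mr < X ω + R ω} ≤ ∑ r ∈ S, μ {ω | R ω = r} :=
    (measure_mono hsub).trans (measure_biUnion_finset_le S _)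
  have h2 : ∑ r ∈ S, μ {ω | R ω = r} ≤ (2 * Mx : ℕ) * ((Mr : ENNReal) + 1)⁻¹ := by
    have : ∑ r ∈ S, μ {ω | R ω = r}
        = (S.filter (· ≤ Mr)).card * ((Mr : ENNReal) + 1)⁻¹ := by
      simp only [hR]
      rw [Finset.sum_ite, Finset.sum_const, Finset.sum_const]
      simp [nsmul_eq_mul]
    rw [this]
    have hcard : (S.filter (· ≤ Mr)).card ≤ 2 * Mx := by
      have hsub2 : S.filter (· ≤ Mr) ⊆ Finset.range Mx ∪ Finset.Ioc (Mr - Mx) Mr := by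
        intro r hr
        simp only [Finset.mem_filter, hS, Finset.mem_union, Finset.mem_range,
          Finset.mem_Ioc] at hr ⊢
        rcases hr with ⟨h | h, hle⟩
        · exact Or.inl h
        · exact Or.inr ⟨h.1, hle⟩
      calc (S.filter (· ≤ Mr)).card ≤ (Finset.range Mx ∪ Finset.Ioc (Mr - Mx) Mr).card :=
            Finset.card_le_card hsub2
        _ ≤ (Finset.range Mx).card + (Finset.Ioc (Mr - Mx) Mr).card := Finset.card_union_le _ _
        _ = Mx + (Mr - (Mr - Mx)) := by simp
        _ ≤ 2 * Mx := by omega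
    exact mul_le_mul_left (by exact_mod_cast hcard) _
  have h3 := h1.trans h2
  have hne : ((2 * Mx : ℕ) : ENNReal) * ((Mr : ENNReal) + 1)⁻¹ ≠ ⊤ :=
    ENNReal.mul_ne_top (ENNReal.natCast_ne_top _) (ENNReal.inv_ne_top.mpr (by simp))
  calc (μ {ω | X ω + R ω < Mx ∨ Mr < X ω + R ω}).toReal
      ≤ (((2 * Mx : ℕ) : ENNReal) * ((Mr : ENNReal) + 1)⁻¹).toReal :=
        ENNReal.toReal_mono hne h3
    _ = 2 * Mx / (Mr + 1) := by
        have : ((Mr : ENNReal) + 1) = ((Mr + 1 : ℕ) : ENNReal) := by push_cast; ring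
        rw [ENNReal.toReal_mul, ENNReal.toReal_inv, this, ENNReal.toReal_natCast, ENNReal.toReal_natCast]
        rw [div_eq_mul_inv]
        push_cast
        ring
end
end
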